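/- For every integer n ≥ 109, ∏_{k=109}^{n} (k/8.5 + 2)^{1/(k−1)} ≤ (119.5/107.5)^{9/8} · exp(9/215) · (8.5/107.5)^{(1/2)·ln(107.5/8.5)} · ((n − 0.5)/8.5)^{(1/2)·ln((n − 0.5)/8.5)}. -/

import Mathlib

/-!
Taking logarithms, the product becomes `∑ log (k / 8.5 + 2) / (k - 1)`. With `u = k - 1`, the
term `log ((u + 18) / 8.5) / u` is at most the increment `Φ (u + 1/2) - Φ (u - 1/2)` of
`Φ x = ½ log (x / 8.5)² - (9/8) log ((x + 12) / x) - 4.5 / x`, so the sum telescopes to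
`Φ (n - 1/2) - Φ 107.5 ≤ ½ log ((n - 1/2) / 8.5)² - Φ 107.5`.

The leading term of `Φ` is an antiderivative of `log (x / 8.5) / x`, and the corrections make
the increment agree with the term up to order `u⁻³`, where a surplus `log (u / 8.5) / (12 u³)`
is left. The increment bound therefore needs logarithm estimates that are sharp to that order:
the Padé bound `log (1 + x) ≤ x (6 + x) / (6 + 4 x)` and the first two terms of the series of
`log ((x + y) / (x - y))`. With them it reduces to a rational inequality in `u`.
-/

open Real Set Finset

namespace Real

theorem log_one_add_le_pade {x : ℝ} (hx : 0 ≤ x) :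
    log (1 + x) ≤ x * (6 + x) / (6 + 4 * x) := by
  let f : ℝ → ℝ := fun t ↦ t * (6 + t) / (6 + 4 * t) - log (1 + t)
  have hf : ∀ t, 0 ≤ t → HasDerivAt f (4 * t ^ 3 / ((6 + 4 * t) ^ 2 * (1 + t))) t := by
    intro t ht
    refine ((((hasDerivAt_id t).mul ((hasDerivAt_id t).const_add 6)).div
      (((hasDerivAt_id t).const_mul 4).const_add 6) (by simp; positivity)).sub
      (((hasDerivAt_id t).const_add 1).log (by simp; positivity))).congr_deriv ?_
    simp only [Pi.mul_apply, id]
    field_simp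
    ring
  have hmono : MonotoneOn f (Ici 0) :=
    monotoneOn_of_hasDerivWithinAt_nonneg (convex_Ici 0)
      (fun t ht ↦ (hf t ht).continuousAt.continuousWithinAt)
      (fun t ht ↦ (hf t (interior_subset ht)).hasDerivWithinAt)
      (fun t ht ↦ by have : 0 ≤ t := interior_subset ht; positivity)
  simpa [f] using hmono self_mem_Ici hx hx

theorem two_mul_div_add_le_log_sub_log {x y : ℝ} (hy : 0 ≤ y) (hyx : y < x) :
    2 * (y / x) + 2 / 3 * (y / x) ^ 3 ≤ log (x + y) - log (x - y) := by
  have hx : 0 < x := hy.trans_lt hyx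
  have hh : |y / x| < 1 := by
    rw [abs_of_nonneg (by positivity), div_lt_one hx]; exact hyx
  have hsum :=
    sum_le_hasSum (range 2) (fun k _ ↦ by positivity) (hasSum_log_sub_log_of_abs_lt_one hh)
  rw [one_add_div hx.ne', one_sub_div hx.ne', log_div (by linarith) hx.ne',
    log_div (by linarith) hx.ne'] at hsum
  norm_num [sum_range_succ] at hsum
  linarith

theorem two_mul_log_sub_le_log_add_add_log_sub {x y : ℝ} (hy : 0 ≤ y) (hyx : y < x) :
    2 * log x - y ^ 2 / (x ^ 2 - y ^ 2) ≤ log (x + y) + log (x - y) := by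
  have hx : 0 < x := hy.trans_lt hyx
  have hxy : 0 < x - y := sub_pos.mpr hyx
  have h := one_sub_inv_le_log_of_pos (x := (x + y) * (x - y) / x ^ 2) (by positivity)
  rw [log_div (by positivity) (by positivity), log_mul (by positivity) hxy.ne', log_pow, inv_div,
    one_sub_div (by positivity), show (x + y) * (x - y) = x ^ 2 - y ^ 2 by ring] at h
  push_cast at h
  linear_combination h

end Real

namespace HermiteProduct

noncomputable def potential (x : ℝ) : ℝ :=
  1 / 2 * log (x / 8.5) ^ 2 - 9 / 8 * log ((x + 12) / x) - 4.5 / x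

theorem potential_le_half_log_sq {x : ℝ} (hx : 0 < x) :
    potential x ≤ 1 / 2 * log (x / 8.5) ^ 2 := by
  have : 0 ≤ log ((x + 12) / x) := log_nonneg (by rw [le_div_iff₀ hx]; linarith)
  have : 0 ≤ 4.5 / x := by positivity
  unfold potential
  linarith

theorem rational_bound {u : ℝ} (hu : 1 ≤ u) :
    18 * (u + 3) / u ^ 2 / (u + 12) + 1 / (4 * u ^ 2 - 1) / 2 / u ≤
      (16 * u ^ 2 - 5) / (4 * u ^ 2 - 1) / (24 * u ^ 3) + 54 / (4 * u ^ 2 + 48 * u - 1) +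
        18 / (4 * u ^ 2 - 1) := by
  have hu0 : 0 < u := by linarith
  have hc : 0 < 4 * u ^ 2 - 1 := by nlinarith
  have hE : 0 < 4 * u ^ 2 + 48 * u - 1 := by nlinarith
  have hN : 0 ≤ 16 * u ^ 5 + 2112 * u ^ 4 + 12648 * u ^ 3 + 61248 * u ^ 2 - 4171 * u + 60 := by
    nlinarith [pow_pos hu0 3]
  -- after cross-multiplying, the difference of the two sides is `2 u³ (4 u² - 1)²` times `hN`
  simp only [div_div]
  rw [div_add_div _ _ (by positivity) (by positivity),
    div_add_div _ _ (by positivity) (by positivity),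
    div_add_div _ _ (by positivity) (by positivity),
    div_le_div_iff₀ (by positivity) (by positivity)]
  linear_combination (2 * u ^ 3 * (4 * u ^ 2 - 1) ^ 2) * hN

theorem two_le_log_sub_log {u : ℝ} (hu : 63 ≤ u) : 2 ≤ log u - log 8.5 := by
  rw [← log_div (by linarith) (by norm_num), le_log_iff_exp_le (by positivity)]
  calc exp 2 = exp 1 ^ 2 := by rw [← exp_nat_mul]; norm_num
    _ ≤ 2.72 ^ 2 := by gcongr; exact exp_one_lt_d9.le.trans (by norm_num)
    _ ≤ u / 8.5 := by rw [le_div_iff₀ (by norm_num)]; linarith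

theorem log_add_eighteen_sub_log_le {u : ℝ} (hu : 0 < u) :
    log (u + 18) - log u ≤ 18 * (u + 3) / u / (u + 12) := by
  have h := log_one_add_le_pade (x := 18 / u) (by positivity)
  rw [one_add_div hu.ne', log_div (by positivity) hu.ne'] at h
  convert h using 1
  field_simp
  ring

theorem div_le_log_cross_ratio {u : ℝ} (hu : 1 ≤ u) :
    48 / (4 * u ^ 2 + 48 * u - 1) ≤
      log (u + 1 / 2) + log (u - 1 / 2 + 12) - (log (u - 1 / 2) + log (u + 1 / 2 + 12)) := by
  have hx : 6 < u ^ 2 + 12 * u - 1 / 4 := by nlinarith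
  have h := two_mul_div_add_le_log_sub_log (by norm_num) hx
  rw [show u ^ 2 + 12 * u - 1 / 4 + 6 = (u + 1 / 2) * (u - 1 / 2 + 12) by ring,
    show u ^ 2 + 12 * u - 1 / 4 - 6 = (u - 1 / 2) * (u + 1 / 2 + 12) by ring,
    log_mul (by linarith) (by linarith), log_mul (by linarith) (by linarith)] at h
  have e : 2 * (6 / (u ^ 2 + 12 * u - 1 / 4)) = 48 / (4 * u ^ 2 + 48 * u - 1) := by
    rw [mul_div_assoc', div_eq_div_iff (by linarith) (by nlinarith)]
    ring
  have : 0 ≤ 2 / 3 * (6 / (u ^ 2 + 12 * u - 1 / 4)) ^ 3 :=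
    mul_nonneg (by norm_num) (pow_nonneg (div_pos (by norm_num) (by linarith)).le 3)
  linarith

theorem log_term_le_potential_sub {u : ℝ} (hu : 108 ≤ u) :
    log ((u + 18) / 8.5) / u ≤ potential (u + 1 / 2) - potential (u - 1 / 2) := by
  have hu0 : 0 < u := by linarith
  have hum : 0 < u - 1 / 2 := by linarith
  have hc : 0 < 4 * u ^ 2 - 1 := by nlinarith
  have hA := two_le_log_sub_log (by linarith : (63 : ℝ) ≤ u)
  have hmean :=
    two_mul_log_sub_le_log_add_add_log_sub (x := u) (y := 1 / 2) (by norm_num) (by linarith)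
  have hgap := two_mul_div_add_le_log_sub_log (x := u) (y := 1 / 2) (by norm_num) (by linarith)
  have hV := div_le_div_of_nonneg_right (log_add_eighteen_sub_log_le hu0) hu0.le
  have hW := div_le_log_cross_ratio (by linarith : (1 : ℝ) ≤ u)
  have hrat := rational_bound (by linarith : (1 : ℝ) ≤ u)
  have i0 : (1 / 2) ^ 2 / (u ^ 2 - (1 / 2) ^ 2) = 1 / (4 * u ^ 2 - 1) := by
    rw [div_eq_div_iff (by nlinarith) hc.ne']
    ring
  have i1 : 2 / (12 * u ^ 3) - 1 / (4 * u ^ 2 - 1) / 2 / (12 * u ^ 3) =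
      (16 * u ^ 2 - 5) / (4 * u ^ 2 - 1) / (24 * u ^ 3) := by
    rw [div_div _ (4 * u ^ 2 - 1), div_div, div_div,
      div_sub_div _ _ (by positivity) (by positivity),
      div_eq_div_iff (by positivity) (by positivity)]
    ring
  have i2 : 4.5 / (u - 1 / 2) - 4.5 / (u + 1 / 2) = 18 / (4 * u ^ 2 - 1) := by
    rw [div_sub_div _ _ hum.ne' (by positivity), div_eq_div_iff (by positivity) hc.ne']
    ring
  have he : 1 / (4 * u ^ 2 - 1) / 2 ≤ 1 := by
    rw [div_le_one two_pos, div_le_iff₀ hc]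
    nlinarith
  have hgap' : 1 / u + 1 / (12 * u ^ 3) ≤ log (u + 1 / 2) - log (u - 1 / 2) := by
    linear_combination hgap
  -- `½ (a² - b²) = ((a + b) / 2) (a - b)` for the quadratic terms of the potential
  have hprod : (log u - log 8.5 - 1 / (4 * u ^ 2 - 1) / 2) * (1 / u + 1 / (12 * u ^ 3)) ≤
      ((log (u + 1 / 2) + log (u - 1 / 2)) / 2 - log 8.5) * (log (u + 1 / 2) - log (u - 1 / 2)) :=
    mul_le_mul (by linarith) hgap' (by positivity) (by linarith)
  have hAk := mul_le_mul_of_nonneg_right hA (by positivity : (0 : ℝ) ≤ 1 / (12 * u ^ 3))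
  unfold potential
  rw [log_div (by linarith) (by norm_num), log_div (by linarith) (by norm_num),
    log_div hum.ne' (by norm_num), log_div (by linarith) (by linarith),
    log_div (by linarith) hum.ne']
  linear_combination hprod + hV + hAk + 9 / 8 * hW + hrat - i1 - i2

theorem sum_log_term_le_potential_sub {n : ℕ} (hn : 109 ≤ n) :
    ∑ k ∈ Icc 109 n, log ((k : ℝ) / 8.5 + 2) * (1 / ((k : ℝ) - 1)) ≤
      potential ((n : ℝ) - 0.5) - potential 107.5 := by
  calc ∑ k ∈ Icc 109 n, log ((k : ℝ) / 8.5 + 2) * (1 / ((k : ℝ) - 1))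
      ≤ ∑ k ∈ Icc 109 n,
          (potential (((k + 1 : ℕ) : ℝ) - 3 / 2) - potential ((k : ℝ) - 3 / 2)) := by
        refine sum_le_sum fun k hk ↦ ?_
        have hk : (109 : ℝ) ≤ k := by exact_mod_cast (mem_Icc.mp hk).1
        calc log ((k : ℝ) / 8.5 + 2) * (1 / ((k : ℝ) - 1))
            = log (((k : ℝ) - 1 + 18) / 8.5) / ((k : ℝ) - 1) := by ring_nf
          _ ≤ potential ((k : ℝ) - 1 + 1 / 2) - potential ((k : ℝ) - 1 - 1 / 2) :=
            log_term_le_potential_sub (by linarith)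
          _ = _ := by push_cast; ring_nf
    _ = potential ((n : ℝ) - 0.5) - potential 107.5 := by
        rw [sum_Icc_sub hn fun k ↦ potential ((k : ℝ) - 3 / 2)]
        push_cast
        congr 2 <;> ring

end HermiteProduct

theorem prod_bound_13 (n : ℕ) (hn : 109 ≤ n) :
    ∏ k ∈ Finset.Icc 109 n, ((k : ℝ) / 8.5 + 2) ^ (1 / ((k : ℝ) - 1)) ≤
      (119.5 / 107.5) ^ ((9 : ℝ) / 8) * Real.exp (9 / 215) *
        (8.5 / 107.5) ^ ((1 / 2) * Real.log (107.5 / 8.5)) *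
        (((n : ℝ) - 0.5) / 8.5) ^ ((1 / 2) * Real.log (((n : ℝ) - 0.5) / 8.5)) := by
  have hx : (0 : ℝ) < (n : ℝ) - 0.5 := by
    have : (109 : ℝ) ≤ n := by exact_mod_cast hn
    linarith
  have hsum := HermiteProduct.sum_log_term_le_potential_sub hn
  have hlast := HermiteProduct.potential_le_half_log_sq hx
  have hfirst : HermiteProduct.potential 107.5 =
      1 / 2 * log (107.5 / 8.5) ^ 2 - 9 / 8 * log (119.5 / 107.5) - 9 / 215 := by
    norm_num [HermiteProduct.potential]
  have hinv : log (8.5 / 107.5) = -log (107.5 / 8.5) := by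
    rw [← log_inv, inv_div]
  rw [prod_congr rfl fun k _ ↦ rpow_def_of_pos (by positivity) _, ← exp_sum,
    rpow_def_of_pos (by norm_num), rpow_def_of_pos (by norm_num),
    rpow_def_of_pos (div_pos hx (by norm_num)), ← exp_add, ← exp_add, ← exp_add, exp_le_exp, hinv]
  linarith
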